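/- arXiv:math/0106060 — 4 statements merged into one kernel-verified Lean document; each statement's English description precedes it below -/
import Mathlib

section
/- Let f1(x,y) = x² + √2·xy − y², f2(x,y) = i·x² − √2·xy + i·y², f3(x,y) = −x² + √2·xy + y², f4(x,y) = −i·x² − √2·xy − i·y². Then f1⁵ + f2⁵ + f3⁵ + f4⁵ = 0 as polynomials in x, y over ℂ. -/
open MvPolynomial Complex

theorem stmt0
    (f1 f2 f3 f4 : MvPolynomial (Fin 2) ℂ)
    (h1 : f1 = X 0 ^ 2 + C (Real.sqrt 2 : ℂ) * X 0 * X 1 - X 1 ^ 2)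
    (h2 : f2 = C I * X 0 ^ 2 - C (Real.sqrt 2 : ℂ) * X 0 * X 1 + C I * X 1 ^ 2)
    (h3 : f3 = - X 0 ^ 2 + C (Real.sqrt 2 : ℂ) * X 0 * X 1 + X 1 ^ 2)
    (h4 : f4 = - (C I * X 0 ^ 2) - C (Real.sqrt 2 : ℂ) * X 0 * X 1 - C I * X 1 ^ 2) :
    f1 ^ 5 + f2 ^ 5 + f3 ^ 5 + f4 ^ 5 = 0 := by
  subst h1 h2 h3 h4
  apply MvPolynomial.funext
  intro v
  simp only [map_add, map_sub, map_mul, map_pow, map_neg, eval_X, eval_C, map_zero]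
  set x := v 0
  set y := v 1
  set s := ((Real.sqrt 2 : ℝ) : ℂ)
  have hs : s ^ 2 = 2 := by
    have : (Real.sqrt 2) ^ 2 = 2 := Real.sq_sqrt (by norm_num)
    calc s ^ 2 = (((Real.sqrt 2) ^ 2 : ℝ) : ℂ) := by push_cast; ring
    _ = 2 := by rw [this]; norm_num
  have hI : I ^ 2 = -1 := Complex.I_sq
  linear_combination (40 * s * x^3 * y^3 * (x^4 + y^4)) * hs +
    (-20 * s^3 * x^3 * y^3 * (x^2+y^2)^2 - 10 * s * x * y * (x^2+y^2)^4 * (I^2 - 1)) * hI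
end

section
/- The polynomials (x²−y²)^m, (2xy)^m, (x²+y²)^m in ℂ[x,y] are linearly dependent over ℂ if and only if m = 2. -/
/-!
Evaluating a relation `λ₁ (x² - y²)^m + λ₂ (2xy)^m + λ₃ (x² + y²)^m = 0` at `(1, 0)` and `(1, 1)`
forces `(λ₁, λ₂, λ₃)` to be proportional to `(1, 1, -1)`, and then evaluating at `(2, 1)`, i.e. at
the Pythagorean triple `(3, 4, 5)`, gives `3^m + 4^m = 5^m`. This holds only for `m = 2`, since for
`m > 2` every Pythagorean triple satisfies `a^m + b^m < c^m`. Conversely `(x² - y²)² + (2xy)² = (x² + y²)²`.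
-/

open MvPolynomial

theorem pow_add_pow_lt_pow_of_sq_add_sq_eq {a b c m : ℕ} (ha : 0 < a) (hb : 0 < b)
    (habc : a ^ 2 + b ^ 2 = c ^ 2) (hm : 2 < m) : a ^ m + b ^ m < c ^ m := by
  have hac : a < c := lt_of_pow_lt_pow_left₀ 2 (Nat.zero_le c) <| by
    rw [← habc]; exact Nat.lt_add_of_pos_right (by positivity)
  have hbc : b < c := lt_of_pow_lt_pow_left₀ 2 (Nat.zero_le c) <| by
    rw [← habc]; exact Nat.lt_add_of_pos_left (by positivity)
  obtain ⟨k, rfl⟩ : ∃ k, m = k + 2 + 1 := ⟨m - 3, by omega⟩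
  calc a ^ (k + 2 + 1) + b ^ (k + 2 + 1)
      = a ^ 2 * a ^ (k + 1) + b ^ 2 * b ^ (k + 1) := by ring
    _ < a ^ 2 * c ^ (k + 1) + b ^ 2 * c ^ (k + 1) := by
        gcongr
    _ = c ^ (k + 2 + 1) := by rw [← add_mul, habc]; ring

theorem three_pow_add_four_pow_eq_five_pow_iff {m : ℕ} : 3 ^ m + 4 ^ m = 5 ^ m ↔ m = 2 := by
  refine ⟨fun h => ?_, fun h => h ▸ rfl⟩
  by_contra hne
  rcases lt_or_gt_of_ne hne with hlt | hgt
  · interval_cases m <;> simp_all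
  · exact (pow_add_pow_lt_pow_of_sq_add_sq_eq (by norm_num) (by norm_num) (by norm_num) hgt).ne h

theorem three_pow_add_four_pow_eq_five_pow_of_relation {K : Type*} [Field K] [CharZero K]
    {m : ℕ} (hm : m ≠ 0) {l₁ l₂ l₃ : K} (hne : ¬(l₁ = 0 ∧ l₂ = 0 ∧ l₃ = 0))
    (hrel : ∀ a b : K, l₁ * (a ^ 2 - b ^ 2) ^ m + l₂ * (2 * a * b) ^ m + l₃ * (a ^ 2 + b ^ 2) ^ m = 0) :
    (3 : K) ^ m + 4 ^ m = 5 ^ m := by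
  have h₁₀ := hrel 1 0
  have h₁₁ := hrel 1 1
  have h₂₁ := hrel 2 1
  norm_num [hm] at h₁₀ h₁₁ h₂₁
  have hl₃ : l₃ = -l₁ := by linear_combination h₁₀
  have hl₂ : l₂ = l₁ := by
    have : (l₂ + l₃) * 2 ^ m = 0 := by linear_combination h₁₁
    linear_combination (mul_eq_zero.mp this).resolve_right (pow_ne_zero _ two_ne_zero) - hl₃
  have hl₁ : l₁ ≠ 0 := by
    rintro rfl
    exact hne ⟨rfl, by simp [hl₂], by simp [hl₃]⟩
  have : l₁ * ((3 : K) ^ m + 4 ^ m - 5 ^ m) = 0 := by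
    linear_combination h₂₁ - 4 ^ m * hl₂ - 5 ^ m * hl₃
  linear_combination (mul_eq_zero.mp this).resolve_left hl₁

theorem stmt3 (m : ℕ) (hm : 0 < m) :
    (∃ l1 l2 l3 : ℂ, ¬(l1 = 0 ∧ l2 = 0 ∧ l3 = 0) ∧
      C l1 * ((X 0 : MvPolynomial (Fin 2) ℂ) ^ 2 - X 1 ^ 2) ^ m
        + C l2 * (2 * X 0 * X 1) ^ m
        + C l3 * (X 0 ^ 2 + X 1 ^ 2) ^ m = 0) ↔ m = 2 := by
  constructor
  · rintro ⟨l1, l2, l3, hne, hrel⟩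
    have hpow : (3 : ℂ) ^ m + 4 ^ m = 5 ^ m :=
      three_pow_add_four_pow_eq_five_pow_of_relation hm.ne' hne fun a b => by
        simpa using congrArg (eval ![a, b]) hrel
    exact three_pow_add_four_pow_eq_five_pow_iff.mp (by exact_mod_cast hpow)
  · rintro rfl
    exact ⟨1, 1, -1, by norm_num, by simp only [map_one, map_neg]; ring⟩
end

section
/- Let F = {f_1, …, f_r} be pairwise non-proportional nonzero linear forms in ℂ[x_1, …, x_n]. If the powers f_1^m, …, f_r^m are linearly dependent over ℂ for some integer m ≥ 2, then f_1^{m−1}, …, f_r^{m−1} are also linearly dependent over ℂ. -/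
/-! Differentiating a relation `∑ gⱼ fⱼ ^ m = 0` with respect to a variable `xᵢ` gives
`∑ m gⱼ (∂ᵢ fⱼ) fⱼ ^ (m - 1) = 0`, and the derivative `∂ᵢ fⱼ` of a linear form is a constant.
Choosing `xᵢ` to occur in a form `f_{j₀}` with `g_{j₀} ≠ 0` keeps the new relation nontrivial. -/

open MvPolynomial

namespace MvPolynomial

variable {σ R : Type*}

theorem IsHomogeneous.exists_coeff_single_one_ne_zero [CommSemiring R] {p : MvPolynomial σ R}
    (hp : p.IsHomogeneous 1) (hp0 : p ≠ 0) : ∃ i, coeff (Finsupp.single i 1) p ≠ 0 := by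
  obtain ⟨d, hd⟩ := ne_zero_iff.1 hp0
  have hdeg : d.degree = 1 := by rw [Finsupp.degree_eq_weight_one]; exact hp hd
  obtain ⟨i, rfl⟩ := (Finsupp.sum_eq_one_iff d).1 hdeg
  exact ⟨i, hd⟩

theorem IsHomogeneous.pderiv_eq_C [CommSemiring R] {p : MvPolynomial σ R}
    (hp : p.IsHomogeneous 1) (i : σ) : pderiv i p = C (coeff (Finsupp.single i 1) p) := by
  classical
  have hspan : p ∈ Submodule.span R (Set.range X) := by
    rw [← homogeneousSubmodule_one_eq_span_X]; exact hp
  clear hp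
  induction hspan using Submodule.span_induction with
  | mem q hq =>
    obtain ⟨j, rfl⟩ := hq
    by_cases hji : j = i
    · subst hji; simp
    · simp [hji, coeff_X, Finsupp.single_left_inj one_ne_zero]
  | zero => simp
  | add q q' _ _ hq hq' => simp [hq, hq']
  | smul a q _ hq => simp [hq, smul_eq_C_mul]

theorem IsHomogeneous.pderiv_pow [CommSemiring R] {p : MvPolynomial σ R}
    (hp : p.IsHomogeneous 1) (i : σ) (m : ℕ) :
    pderiv i (p ^ m) = (m * coeff (Finsupp.single i 1) p) • p ^ (m - 1) := by
  rw [MvPolynomial.pderiv_pow, hp.pderiv_eq_C, smul_eq_C_mul, map_mul, map_natCast]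
  ring

theorem not_linearIndependent_pow_pred_of_isHomogeneous [CommRing R] [IsDomain R] [CharZero R]
    {ι : Type*} [Fintype ι] {f : ι → MvPolynomial σ R} {m : ℕ} (hm : m ≠ 0)
    (hne : ∀ j, f j ≠ 0) (hhom : ∀ j, (f j).IsHomogeneous 1)
    (hdep : ¬ LinearIndependent R (fun j => f j ^ m)) :
    ¬ LinearIndependent R (fun j => f j ^ (m - 1)) := by
  rw [Fintype.not_linearIndependent_iff] at hdep ⊢
  obtain ⟨g, hg, j₀, hj₀⟩ := hdep
  obtain ⟨i, hi⟩ := (hhom j₀).exists_coeff_single_one_ne_zero (hne j₀)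
  refine ⟨fun j => g j * (m * coeff (Finsupp.single i 1) (f j)), ?_, j₀, ?_⟩
  · simpa [mul_smul, (hhom _).pderiv_pow] using congrArg (pderiv i) hg
  · exact mul_ne_zero hj₀ (mul_ne_zero (Nat.cast_ne_zero.2 hm) hi)

end MvPolynomial

theorem stmt5_general (r n m : ℕ) (hm : 2 ≤ m) (f : Fin r → MvPolynomial (Fin n) ℂ)
    (hne : ∀ j, f j ≠ 0)
    (hhom : ∀ j, (f j).IsHomogeneous 1)
    (hdep : ¬ LinearIndependent ℂ (fun j => f j ^ m)) :
    ¬ LinearIndependent ℂ (fun j => f j ^ (m - 1)) :=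
  not_linearIndependent_pow_pred_of_isHomogeneous (by omega) hne hhom hdep

theorem stmt5 (r n m : ℕ) (hm : 2 ≤ m) (f : Fin r → MvPolynomial (Fin n) ℂ)
    (hne : ∀ j, f j ≠ 0)
    (hhom : ∀ j, (f j).IsHomogeneous 1)
    (hprop : ∀ i j, i ≠ j → ∀ c : ℂ, f i ≠ c • f j)
    (hdep : ¬ LinearIndependent ℂ (fun j => f j ^ m)) :
    ¬ LinearIndependent ℂ (fun j => f j ^ (m - 1)) :=
  stmt5_general r n m hm f hne hhom hdep
end

section
/- Let f_1, …, f_r be pairwise non-proportional nonzero linear forms in ℂ[x_1, …, x_n]. If f_1^m, …, f_r^m are linearly dependent over ℂ for some positive integer m, then m ≤ r − 2. -/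
/-!
Restrict to a generic line `t ↦ t • u + z`. There each `f j` becomes `α j • (X + C (γ j))`
with `α j = f j (u) ≠ 0`, and non-proportionality makes the `γ j = f j (z) / f j (u)`
pairwise distinct for generic `u, z`. A relation `∑ g j • f j ^ m = 0` then restricts to
`∑ g j • α j ^ m • (X + C (γ j)) ^ m = 0`, whose coefficients of `X ^ (m - l)` for
`l < r ≤ m + 1` form a nonsingular Vandermonde system in the `γ j`; hence `g = 0`.
-/

open MvPolynomial

namespace MvPolynomial

variable {σ : Type*}

theorem IsHomogeneous.exists_eq_sum_smul_X {R : Type*} [CommSemiring R] [Fintype σ]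
    {p : MvPolynomial σ R} (hp : p.IsHomogeneous 1) :
    ∃ c : σ → R, p = ∑ i, c i • X i := by
  rw [← mem_homogeneousSubmodule, homogeneousSubmodule_one_eq_span_X,
    Submodule.mem_span_range_iff_exists_fun] at hp
  obtain ⟨c, hc⟩ := hp
  exact ⟨c, hc.symm⟩

theorem IsHomogeneous.aeval_smul_X_add_C {R : Type*} [CommSemiring R] [Fintype σ]
    {p : MvPolynomial σ R} (hp : p.IsHomogeneous 1) (u z : σ → R) :
    MvPolynomial.aeval (fun i => u i • Polynomial.X + Polynomial.C (z i)) p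
      = eval u p • Polynomial.X + Polynomial.C (eval z p) := by
  obtain ⟨c, rfl⟩ := hp.exists_eq_sum_smul_X
  simp [Finset.sum_add_distrib, Finset.sum_smul, mul_smul, Polynomial.smul_C]

theorem exists_forall_eval_ne_zero {R ι : Type*} [CommRing R] [IsDomain R] [Infinite R]
    (s : Finset ι) (p : ι → MvPolynomial σ R) (hp : ∀ i ∈ s, p i ≠ 0) :
    ∃ x : σ → R, ∀ i ∈ s, eval x (p i) ≠ 0 := by
  have hprod : ∏ i ∈ s, p i ≠ 0 := Finset.prod_ne_zero_iff.mpr hp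
  obtain ⟨x, hx⟩ : ∃ x, eval x (∏ i ∈ s, p i) ≠ 0 := by
    by_contra! h
    exact hprod (MvPolynomial.funext fun x => by simpa using h x)
  rw [map_prod, Finset.prod_ne_zero_iff] at hx
  exact ⟨x, hx⟩

theorem exists_eval_ne_zero_injective_div_eval {K ι : Type*} [Field K] [Infinite K] [Fintype ι]
    (f : ι → MvPolynomial σ K) (hne : ∀ j, f j ≠ 0)
    (hprop : ∀ i j, i ≠ j → ∀ c : K, f i ≠ c • f j) :
    ∃ u z : σ → K, (∀ j, eval u (f j) ≠ 0) ∧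
      Function.Injective fun j => eval z (f j) / eval u (f j) := by
  classical
  obtain ⟨u, hu⟩ := exists_forall_eval_ne_zero Finset.univ f fun j _ => hne j
  replace hu j : eval u (f j) ≠ 0 := hu j (Finset.mem_univ j)
  let minor : ι × ι → MvPolynomial σ K := fun ij =>
    eval u (f ij.2) • f ij.1 - eval u (f ij.1) • f ij.2
  have hminor : ∀ ij ∈ Finset.univ.offDiag, minor ij ≠ 0 := by
    rintro ⟨i, j⟩ hij h
    refine hprop i j (Finset.mem_offDiag.mp hij).2.2 (eval u (f i) / eval u (f j)) ?_
    rw [div_eq_inv_mul, mul_smul, eq_inv_smul_iff₀ (hu j)]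
    exact sub_eq_zero.mp h
  obtain ⟨z, hz⟩ := exists_forall_eval_ne_zero _ minor hminor
  refine ⟨u, z, hu, fun i j hγij => ?_⟩
  by_contra hij
  apply hz (i, j) (by simpa using hij)
  simp only [minor, map_sub, smul_eval]
  rw [div_eq_div_iff (hu i) (hu j)] at hγij
  linear_combination hγij

end MvPolynomial

namespace Polynomial

theorem linearIndependent_X_add_C_pow {K : Type*} [Field K] [CharZero K] {r m : ℕ}
    (hr : r ≤ m + 1) {γ : Fin r → K} (hγ : Function.Injective γ) :
    LinearIndependent K fun j => (X + C (γ j)) ^ m := by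
  rw [Fintype.linearIndependent_iff]
  intro g hg
  have hpow : ∀ l : Fin r, ∑ j, g j * γ j ^ (l : ℕ) = 0 := by
    intro l
    have hl : (l : ℕ) ≤ m := by omega
    have hcoeff := congrArg (coeff · (m - l)) hg
    simp only [finsetSum_coeff, coeff_smul, coeff_X_add_C_pow, Nat.sub_sub_self hl, smul_eq_mul,
      coeff_zero] at hcoeff
    have hchoose : (m.choose (m - l) : K) ≠ 0 :=
      Nat.cast_ne_zero.mpr (Nat.choose_pos (Nat.sub_le m l)).ne'
    simpa [← mul_assoc, ← Finset.sum_mul, hchoose] using hcoeff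
  exact congrFun (Matrix.eq_zero_of_forall_pow_sum_mul_pow_eq_zero hγ hpow)

end Polynomial

theorem stmt6_general (r n m : ℕ) (f : Fin r → MvPolynomial (Fin n) ℂ)
    (hne : ∀ j, f j ≠ 0)
    (hhom : ∀ j, (f j).IsHomogeneous 1)
    (hprop : ∀ i j, i ≠ j → ∀ c : ℂ, f i ≠ c • f j)
    (hdep : ¬ LinearIndependent ℂ (fun j => f j ^ m)) :
    m ≤ r - 2 := by
  by_contra hcon
  obtain ⟨u, z, hα, hγ⟩ := exists_eval_ne_zero_injective_div_eval f hne hprop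
  let α : Fin r → ℂˣ := fun j => Units.mk0 (eval u (f j)) (hα j)
  let line : MvPolynomial (Fin n) ℂ →ₐ[ℂ] Polynomial ℂ :=
    aeval fun i => u i • Polynomial.X + Polynomial.C (z i)
  have hline : ⇑line.toLinearMap ∘ (fun j => f j ^ m) = α ^ m • fun j =>
      (Polynomial.X + Polynomial.C (eval z (f j) / eval u (f j))) ^ m := by
    funext j
    change line (f j ^ m) = (α j ^ m : ℂˣ) • _
    rw [map_pow, (hhom j).aeval_smul_X_add_C, Units.smul_def, Units.val_pow_eq_pow_val,
      Units.val_mk0, ← smul_pow, smul_add, Polynomial.smul_C, smul_eq_mul,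
      mul_div_cancel₀ _ (hα j)]
  refine hdep (LinearIndependent.of_comp line.toLinearMap ?_)
  rw [hline]
  exact (Polynomial.linearIndependent_X_add_C_pow (by omega : r ≤ m + 1) hγ).units_smul _

theorem stmt6 (r n m : ℕ) (hm : 0 < m) (f : Fin r → MvPolynomial (Fin n) ℂ)
    (hne : ∀ j, f j ≠ 0)
    (hhom : ∀ j, (f j).IsHomogeneous 1)
    (hprop : ∀ i j, i ≠ j → ∀ c : ℂ, f i ≠ c • f j)
    (hdep : ¬ LinearIndependent ℂ (fun j => f j ^ m)) :
    m ≤ r - 2 :=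
  stmt6_general r n m f hne hhom hprop hdep
end
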